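/- Fix ε > 0 and x > 0. Let (t_n) be a sequence of odd integers with t_n → ∞ and (L_n) a sequence of positive integers such that L_n · t_n · e^{−ε t_n} → x. Define K_n = (2t_n − 2)·(1 − e^{−ε t_n})^{L_n} + (1 − t_n·e^{−ε(t_n−1)} + (t_n−1)·e^{−ε t_n})^{L_n} + (1 + t_n·e^{−ε(t_n−1)} + (t_n−1)·e^{−ε t_n})^{L_n}. Then K_n − 2·t_n → e^{x(1+e^{ε})} + e^{x(1−e^{ε})} − 2 − 2x. That is, in the Thouless scaling limit the periodic-boundary spectral form factor of the Floquet-TRS random phase model at odd times converges to the scaling function f_ε(e^x) − 2x with f_ε(y) = y^{1+e^{ε}} + y^{1−e^{ε}} − 2. -/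

import Mathlib

open Filter Topology

lemma aux_log_ratio : Tendsto (fun z : ℝ => Real.log (1+z) / z) (𝓝[≠] 0) (𝓝 1) := by
  have h : HasDerivAt (fun z : ℝ => Real.log (1+z)) 1 0 := by
    have := (Real.hasDerivAt_log (by norm_num : (1:ℝ) + 0 ≠ 0)).comp 0
      ((hasDerivAt_id (0:ℝ)).const_add 1)
    simpa [Function.comp_def] using this
  have h2 := hasDerivAt_iff_tendsto_slope.mp h
  refine h2.congr' ?_
  filter_upwards [] with z
  simp [slope_def_field]

lemma aux_exp_ratio : Tendsto (fun s : ℝ => (Real.exp s - 1) / s) (𝓝[≠] 0) (𝓝 1) := by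
  have h2 := hasDerivAt_iff_tendsto_slope.mp (Real.hasDerivAt_exp 0)
  simp only [Real.exp_zero] at h2
  refine h2.congr' ?_
  filter_upwards [] with z
  simp [slope_def_field]

lemma aux_pow_exp (L : ℕ → ℕ) (c : ℕ → ℝ) (y : ℝ)
    (hc0 : ∀ n, c n ≠ 0) (hc : Tendsto c atTop (𝓝 0))
    (hLc : Tendsto (fun n => (L n : ℝ) * c n) atTop (𝓝 y)) :
    Tendsto (fun n => (1 + c n) ^ (L n)) atTop (𝓝 (Real.exp y)) := by
  have hcne : Tendsto c atTop (𝓝[≠] (0:ℝ)) :=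
    tendsto_nhdsWithin_of_tendsto_nhds_of_eventually_within _ hc
      (Eventually.of_forall hc0)
  have hratio : Tendsto (fun n => Real.log (1 + c n) / c n) atTop (𝓝 1) :=
    aux_log_ratio.comp hcne
  have hg : Tendsto (fun n => (L n : ℝ) * Real.log (1 + c n)) atTop (𝓝 y) := by
    have h := hLc.mul hratio
    rw [mul_one] at h
    refine h.congr (fun n => ?_)
    field_simp [hc0 n]
  have hpos : ∀ᶠ n in atTop, 0 < 1 + c n := by
    have := hc.eventually (eventually_gt_nhds (by norm_num : (-1:ℝ) < 0))
    filter_upwards [this] with n hn; linarith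
  have := (Real.continuous_exp.tendsto y).comp hg
  refine this.congr' ?_
  filter_upwards [hpos] with n hn
  simp only [Function.comp]
  rw [Real.exp_nat_mul, Real.exp_log hn]

lemma aux_mul_exp_sub_one (t : ℕ → ℕ) (s : ℕ → ℝ) (y : ℝ)
    (hs0 : ∀ n, s n ≠ 0) (hs : Tendsto s atTop (𝓝 0))
    (hts : Tendsto (fun n => (t n : ℝ) * s n) atTop (𝓝 y)) :
    Tendsto (fun n => (t n : ℝ) * (Real.exp (s n) - 1)) atTop (𝓝 y) := by
  have hsne : Tendsto s atTop (𝓝[≠] (0:ℝ)) :=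
    tendsto_nhdsWithin_of_tendsto_nhds_of_eventually_within _ hs
      (Eventually.of_forall hs0)
  have hratio : Tendsto (fun n => (Real.exp (s n) - 1) / s n) atTop (𝓝 1) :=
    aux_exp_ratio.comp hsne
  have h := hts.mul hratio
  rw [mul_one] at h
  refine h.congr (fun n => ?_)
  field_simp [hs0 n]

/-- Thouless scaling limit of the Floquet-TRS spectral form factor
at odd times (pbc): if `t_n` are odd, `t_n → ∞` and `L_n t_n e^{−ε t_n} → x`, then
`K_n − 2 t_n → e^{x(1+e^ε)} + e^{x(1−e^ε)} − 2 − 2x`, where `K_n` is the exact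
infinite-`q` SFF of the Floquet-TRS random phase model. -/
theorem floquet_trs_sff_scaling (ε x : ℝ) (hε : 0 < ε) (hx : 0 < x)
    (t L : ℕ → ℕ) (htodd : ∀ n, Odd (t n)) (hL : ∀ n, 1 ≤ L n)
    (httop : Tendsto (fun n => (t n : ℝ)) atTop atTop)
    (hscal : Tendsto (fun n => (L n : ℝ) * (t n : ℝ) * Real.exp (-ε * (t n : ℝ)))
        atTop (nhds x)) :
    Tendsto (fun n =>
        ((2 * (t n : ℝ) - 2) * (1 - Real.exp (-ε * (t n : ℝ))) ^ (L n)
          + (1 - (t n : ℝ) * Real.exp (-ε * ((t n : ℝ) - 1))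
              + ((t n : ℝ) - 1) * Real.exp (-ε * (t n : ℝ))) ^ (L n)
          + (1 + (t n : ℝ) * Real.exp (-ε * ((t n : ℝ) - 1))
              + ((t n : ℝ) - 1) * Real.exp (-ε * (t n : ℝ))) ^ (L n))
          - 2 * (t n : ℝ))
      atTop
      (nhds (Real.exp (x * (1 + Real.exp ε)) + Real.exp (x * (1 - Real.exp ε))
        - 2 - 2 * x)) := by
  set E : ℝ := Real.exp ε with hEdef
  have hE1 : 1 < E := by
    have := Real.add_one_lt_exp (ne_of_gt hε)
    linarith
  set e : ℕ → ℝ := fun n => Real.exp (-ε * (t n : ℝ)) with hedef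
  have ht1 : ∀ n, (1:ℝ) ≤ (t n : ℝ) := by
    intro n
    exact_mod_cast Nat.one_le_iff_ne_zero.mpr (fun h => by simpa [h] using htodd n)
  have htne : ∀ n, (t n : ℝ) ≠ 0 := fun n => by linarith [ht1 n]
  have hL1 : ∀ n, (1:ℝ) ≤ (L n : ℝ) := fun n => by exact_mod_cast hL n
  have hepos : ∀ n, 0 < e n := fun n => Real.exp_pos _
  have helt1 : ∀ n, e n < 1 := by
    intro n
    have : -ε * (t n : ℝ) < 0 := by nlinarith [ht1 n]
    simpa [hedef] using Real.exp_lt_one_iff.mpr this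
  have hrw : ∀ n, Real.exp (-ε * ((t n : ℝ) - 1)) = E * e n := by
    intro n
    rw [hEdef, hedef, ← Real.exp_add]
    ring_nf
  have hεt_top : Tendsto (fun n => ε * (t n : ℝ)) atTop atTop :=
    httop.const_mul_atTop hε
  have he0 : Tendsto e atTop (𝓝 0) := by
    have h1 : Tendsto (fun n => -(ε * (t n : ℝ))) atTop atBot :=
      tendsto_neg_atBot_iff.mpr hεt_top
    have := Real.tendsto_exp_atBot.comp h1
    refine this.congr (fun n => ?_)
    simp [hedef, Function.comp]
  have hte0 : Tendsto (fun n => (t n : ℝ) * e n) atTop (𝓝 0) := by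
    have h1 : Tendsto (fun y : ℝ => y ^ 1 * Real.exp (-y)) atTop (𝓝 0) :=
      Real.tendsto_pow_mul_exp_neg_atTop_nhds_zero 1
    have h2 := (h1.comp hεt_top).const_mul ε⁻¹
    rw [mul_zero] at h2
    refine h2.congr (fun n => ?_)
    simp only [Function.comp, pow_one, hedef]
    field_simp
  have hLte : Tendsto (fun n => (L n : ℝ) * (t n : ℝ) * e n) atTop (𝓝 x) := hscal
  have hLe0 : Tendsto (fun n => (L n : ℝ) * e n) atTop (𝓝 0) := by
    have h := hLte.mul httop.inv_tendsto_atTop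
    rw [mul_zero] at h
    refine h.congr (fun n => ?_)
    simp only [Pi.inv_apply]
    field_simp [htne n]
  -- term u : (1 - e n)^L → 1
  have hu : Tendsto (fun n => (1 - e n) ^ (L n)) atTop (𝓝 1) := by
    have hc0 : ∀ n, -e n ≠ 0 := fun n => neg_ne_zero.mpr (ne_of_gt (hepos n))
    have hc : Tendsto (fun n => -e n) atTop (𝓝 0) := by simpa using he0.neg
    have hLc : Tendsto (fun n => (L n : ℝ) * (-e n)) atTop (𝓝 0) := by
      have := hLe0.neg
      rw [neg_zero] at this
      refine this.congr (fun n => by ring)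
    have := aux_pow_exp L (fun n => -e n) 0 hc0 hc hLc
    rw [Real.exp_zero] at this
    refine this.congr (fun n => by ring_nf)
  -- s n and t (exp s - 1) → -x
  have hlogneg : ∀ n, Real.log (1 - e n) < 0 := fun n =>
    Real.log_neg (by linarith [helt1 n]) (by linarith [hepos n])
  set s : ℕ → ℝ := fun n => (L n : ℝ) * Real.log (1 - e n) with hsdef
  have hs0 : ∀ n, s n ≠ 0 := by
    intro n
    exact ne_of_lt (mul_neg_of_pos_of_neg (by linarith [hL1 n]) (hlogneg n))
  have hene : Tendsto (fun n => -e n) atTop (𝓝[≠] (0:ℝ)) := by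
    refine tendsto_nhdsWithin_of_tendsto_nhds_of_eventually_within _
      (by simpa using he0.neg) (Eventually.of_forall fun n => ?_)
    exact neg_ne_zero.mpr (ne_of_gt (hepos n))
  have hr : Tendsto (fun n => Real.log (1 + -e n) / (-e n)) atTop (𝓝 1) :=
    aux_log_ratio.comp hene
  have hts : Tendsto (fun n => (t n : ℝ) * s n) atTop (𝓝 (-x)) := by
    have h := (hLte.mul hr).neg
    rw [mul_one] at h
    refine h.congr (fun n => ?_)
    simp only [hsdef]
    have h1 : (1:ℝ) + -e n = 1 - e n := by ring
    rw [h1]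
    field_simp [ne_of_gt (hepos n)]
  have hs_lim : Tendsto s atTop (𝓝 0) := by
    have h := hts.mul httop.inv_tendsto_atTop
    rw [mul_zero] at h
    refine h.congr (fun n => ?_)
    simp only [Pi.inv_apply]
    field_simp [htne n]
  have hA : Tendsto (fun n => (t n : ℝ) * ((1 - e n) ^ (L n) - 1)) atTop (𝓝 (-x)) := by
    have := aux_mul_exp_sub_one t s (-x) hs0 hs_lim hts
    refine this.congr (fun n => ?_)
    rw [hsdef]
    rw [Real.exp_nat_mul, Real.exp_log (by linarith [helt1 n])]
  -- term v
  have hv : Tendsto (fun n => (1 + -(((t n : ℝ) * (E - 1) + 1) * e n)) ^ (L n)) atTop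
      (𝓝 (Real.exp (x * (1 - E)))) := by
    refine aux_pow_exp L _ _ (fun n => ?_) ?_ ?_
    · refine neg_ne_zero.mpr (ne_of_gt (mul_pos ?_ (hepos n)))
      nlinarith [ht1 n]
    · have h := (((hte0.const_mul (E - 1)).add he0).neg)
      simp only [add_zero, mul_zero, neg_zero] at h
      refine h.congr (fun n => by ring)
    · have h := (((hLte.const_mul (E - 1)).add hLe0).neg)
      rw [add_zero] at h
      have hval : -((E - 1) * x) = x * (1 - E) := by ring
      rw [hval] at h
      refine h.congr (fun n => by ring)
  -- term w
  have hw : Tendsto (fun n => (1 + ((t n : ℝ) * (E + 1) - 1) * e n) ^ (L n)) atTop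
      (𝓝 (Real.exp (x * (1 + E)))) := by
    refine aux_pow_exp L _ _ (fun n => ?_) ?_ ?_
    · refine ne_of_gt (mul_pos ?_ (hepos n))
      nlinarith [ht1 n]
    · have h := ((hte0.const_mul (E + 1)).sub he0)
      simp only [mul_zero, sub_zero] at h
      refine h.congr (fun n => by ring)
    · have h := ((hLte.const_mul (E + 1)).sub hLe0)
      rw [sub_zero] at h
      have hval : (E + 1) * x = x * (1 + E) := by ring
      rw [hval] at h
      refine h.congr (fun n => by ring)
  -- assemble
  have final := (((hA.const_mul 2).sub (hu.const_mul 2)).add hv).add hw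
  have hval : Real.exp (x * (1 + E)) + Real.exp (x * (1 - E)) - 2 - 2 * x
      = 2 * (-x) - 2 * 1 + Real.exp (x * (1 - E)) + Real.exp (x * (1 + E)) := by ring
  rw [hval]
  refine final.congr (fun n => ?_)
  rw [hrw n]
  ring
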